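/- arXiv:1901.02228 — 6 statements merged into one kernel-verified Lean document; each statement's English description precedes it below -/
import Mathlib

section
/- Let γ : [a, b] → ℝ^m be a C² curve parameterized by arc length. Then |γ(b) - γ(a)|² = (b - a)² - ∫_a^b ∫_a^b ∫_r^s ∫_r^t ⟨γ''(u), γ''(t)⟩ du dt ds dr. -/
open intervalIntegral MeasureTheory

theorem secant_length_integral_identity (m : ℕ) (a b : ℝ) (hab : a ≤ b)
    (γ τ κ : ℝ → EuclideanSpace ℝ (Fin m))
    (hγ : ∀ t ∈ Set.Icc a b, HasDerivAt γ (τ t) t)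
    (hτ : ∀ t ∈ Set.Icc a b, HasDerivAt τ (κ t) t)
    (hκc : ContinuousOn κ (Set.Icc a b))
    (hunit : ∀ t ∈ Set.Icc a b, ‖τ t‖ = 1) :
    ‖γ b - γ a‖ ^ 2 = (b - a) ^ 2 -
      ∫ r in a..b, ∫ s in a..b, ∫ t in r..s, ∫ u in r..t, (inner ℝ (κ u) (κ t) : ℝ) := by
  rcases eq_or_lt_of_le hab with rfl | hlt
  · simp
  have huIcc : Set.uIcc a b = Set.Icc a b := Set.uIcc_of_le hab
  have hτc : ContinuousOn τ (Set.Icc a b) := fun t ht =>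
    ((hτ t ht).continuousAt).continuousWithinAt
  have hsub : ∀ r ∈ Set.Icc a b, ∀ s ∈ Set.Icc a b, Set.uIcc r s ⊆ Set.Icc a b := by
    intro r hr s hs
    rw [← huIcc]; exact Set.uIcc_subset_uIcc (huIcc ▸ hr) (huIcc ▸ hs)
  -- orthogonality : ⟪τ t, κ t⟫ = 0 on Icc
  have horth : ∀ t ∈ Set.Icc a b, (inner ℝ (τ t) (κ t) : ℝ) = 0 := by
    intro t ht
    have hud : UniqueDiffWithinAt ℝ (Set.Icc a b) t := (uniqueDiffOn_Icc hlt) t ht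
    have h1 : HasDerivWithinAt (fun u => (inner ℝ (τ u) (τ u) : ℝ))
        ((inner ℝ (τ t) (κ t) : ℝ) + (inner ℝ (κ t) (τ t) : ℝ)) (Set.Icc a b) t :=
      HasDerivWithinAt.inner ℝ (hτ t ht).hasDerivWithinAt (hτ t ht).hasDerivWithinAt
    have h2 : HasDerivWithinAt (fun u => (inner ℝ (τ u) (τ u) : ℝ)) 0 (Set.Icc a b) t := by
      refine (hasDerivWithinAt_const t (Set.Icc a b) (1:ℝ)).congr ?_ ?_
      · intro u hu
        rw [real_inner_self_eq_norm_sq, hunit u hu]; norm_num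
      · rw [real_inner_self_eq_norm_sq, hunit t ht]; norm_num
    have heq : (inner ℝ (τ t) (κ t) : ℝ) + (inner ℝ (κ t) (τ t) : ℝ) = 0 := by
      have e1 := h1.derivWithin hud
      have e2 := h2.derivWithin hud
      rw [e1] at e2; exact e2
    rw [real_inner_comm (κ t) (τ t)] at heq
    rw [real_inner_comm]
    linarith
  -- lem1 : ⟪τ r, κ t⟫ = - ∫_r^t ⟪κ u, κ t⟫ du
  have lem1 : ∀ r ∈ Set.Icc a b, ∀ t ∈ Set.Icc a b,
      (inner ℝ (τ r) (κ t) : ℝ) = - ∫ u in r..t, (inner ℝ (κ u) (κ t) : ℝ) := by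
    intro r hr t ht
    have hFTC : (∫ u in r..t, (inner ℝ (κ u) (κ t) : ℝ)) =
        (inner ℝ (τ t) (κ t) : ℝ) - (inner ℝ (τ r) (κ t) : ℝ) := by
      apply intervalIntegral.integral_eq_sub_of_hasDerivAt
        (f := fun u => (inner ℝ (τ u) (κ t) : ℝ))
      · intro u hu
        have hu' := hsub r hr t ht hu
        have := HasDerivAt.inner ℝ (hτ u hu') (hasDerivAt_const u (κ t))
        simpa using this
      · exact (ContinuousOn.inner (hκc.mono (hsub r hr t ht))
          continuousOn_const).intervalIntegrable
    rw [hFTC, horth t ht]; ring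
  -- lem2 : ⟪τ r, τ s⟫ = 1 - ∫_r^s ∫_r^t ⟪κ u, κ t⟫ du dt
  have lem2 : ∀ r ∈ Set.Icc a b, ∀ s ∈ Set.Icc a b,
      (inner ℝ (τ r) (τ s) : ℝ) =
        1 - ∫ t in r..s, ∫ u in r..t, (inner ℝ (κ u) (κ t) : ℝ) := by
    intro r hr s hs
    have hFTC : (∫ t in r..s, (inner ℝ (τ r) (κ t) : ℝ)) =
        (inner ℝ (τ r) (τ s) : ℝ) - (inner ℝ (τ r) (τ r) : ℝ) := by
      apply intervalIntegral.integral_eq_sub_of_hasDerivAt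
        (f := fun s' => (inner ℝ (τ r) (τ s') : ℝ))
      · intro t htm
        have ht' := hsub r hr s hs htm
        have := HasDerivAt.inner ℝ (hasDerivAt_const t (τ r)) (hτ t ht')
        simpa using this
      · exact (ContinuousOn.inner continuousOn_const
          (hκc.mono (hsub r hr s hs))).intervalIntegrable
    have hcongr : (∫ t in r..s, (inner ℝ (τ r) (κ t) : ℝ)) =
        ∫ t in r..s, - ∫ u in r..t, (inner ℝ (κ u) (κ t) : ℝ) :=
      intervalIntegral.integral_congr fun t htm => lem1 r hr t (hsub r hr s hs htm)
    have hone : (inner ℝ (τ r) (τ r) : ℝ) = 1 := by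
      rw [real_inner_self_eq_norm_sq, hunit r hr]; norm_num
    rw [hcongr, intervalIntegral.integral_neg, hone] at hFTC
    linarith
  set T : EuclideanSpace ℝ (Fin m) := ∫ s in a..b, τ s with hT
  have hτint : IntervalIntegrable τ volume a b :=
    (hτc.mono (by rw [huIcc])).intervalIntegrable
  have hdisp : γ b - γ a = T := by
    rw [hT]
    exact (intervalIntegral.integral_eq_sub_of_hasDerivAt
      (fun t htm => hγ t (huIcc ▸ htm)) hτint).symm
  have hinner_int : ∀ x : EuclideanSpace ℝ (Fin m),
      (inner ℝ x T : ℝ) = ∫ s in a..b, (inner ℝ x (τ s) : ℝ) := by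
    intro x
    exact ((innerSL ℝ x).intervalIntegral_comp_comm hτint).symm
  -- ⟪τ r, T⟫ identity
  have hτT : ∀ r ∈ Set.Icc a b, (inner ℝ (τ r) T : ℝ) =
      (b - a) - ∫ s in a..b, ∫ t in r..s, ∫ u in r..t, (inner ℝ (κ u) (κ t) : ℝ) := by
    intro r hr
    rw [hinner_int]
    have hG : (∫ s in a..b, ∫ t in r..s, ∫ u in r..t, (inner ℝ (κ u) (κ t) : ℝ)) =
        ∫ s in a..b, (1 - (inner ℝ (τ r) (τ s) : ℝ)) :=
      intervalIntegral.integral_congr fun s hs => by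
        rw [lem2 r hr s (huIcc ▸ hs)]; ring
    have hic : IntervalIntegrable (fun s => (inner ℝ (τ r) (τ s) : ℝ)) volume a b :=
      (ContinuousOn.inner continuousOn_const (hτc.mono (by rw [huIcc]))).intervalIntegrable
    have hsplit : (∫ s in a..b, (1 - (inner ℝ (τ r) (τ s) : ℝ))) =
        (b - a) - ∫ s in a..b, (inner ℝ (τ r) (τ s) : ℝ) := by
      rw [intervalIntegral.integral_sub intervalIntegrable_const hic]
      simp
    rw [hG, hsplit]; ring
  -- conclude
  have hTT : ‖γ b - γ a‖ ^ 2 = ∫ r in a..b, (inner ℝ (τ r) T : ℝ) := by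
    rw [hdisp, ← real_inner_self_eq_norm_sq, hinner_int T]
    exact intervalIntegral.integral_congr fun r _ => real_inner_comm _ _
  have hTc : ContinuousOn (fun r => (inner ℝ (τ r) T : ℝ)) (Set.uIcc a b) :=
    ContinuousOn.inner (hτc.mono (by rw [huIcc])) continuousOn_const
  have hTi : IntervalIntegrable (fun r => (inner ℝ (τ r) T : ℝ)) volume a b :=
    hTc.intervalIntegrable
  have hH : (∫ r in a..b, ∫ s in a..b, ∫ t in r..s, ∫ u in r..t, (inner ℝ (κ u) (κ t) : ℝ)) =
      ∫ r in a..b, ((b - a) - (inner ℝ (τ r) T : ℝ)) :=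
    intervalIntegral.integral_congr fun r hr => by
      rw [hτT r (huIcc ▸ hr)]; ring
  have hHsplit : (∫ r in a..b, ((b - a) - (inner ℝ (τ r) T : ℝ))) =
      (b - a) * (b - a) - ∫ r in a..b, (inner ℝ (τ r) T : ℝ) := by
    rw [intervalIntegral.integral_sub intervalIntegrable_const hTi,
      intervalIntegral.integral_const, smul_eq_mul, mul_comm]
  rw [hTT, hH, hHsplit]; ring
end

section
/- Let γ : [a, b] → ℝ^m be a C¹ curve parameterized by arc length whose unit tangent τ = γ' is Lipschitz with constant K (i.e., |τ(s) - τ(t)| ≤ K|s - t|). Then for any t ∈ [a, b], the angle between τ(t) and the secant direction (γ(b) - γ(a))/|γ(b) - γ(a)| is at most K·(b - a), provided γ(b) ≠ γ(a). -/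
open Real MeasureTheory intervalIntegral
open scoped RealInnerProductSpace

private lemma aux_inner_lower (m : ℕ) (a b K : ℝ) (hab : a ≤ b) (hK : 0 ≤ K)
    (γ τ : ℝ → EuclideanSpace ℝ (Fin m))
    (hγ : ∀ t ∈ Set.Icc a b, HasDerivAt γ (τ t) t)
    (hunit : ∀ t ∈ Set.Icc a b, ‖τ t‖ = 1)
    (hLip : ∀ s ∈ Set.Icc a b, ∀ t ∈ Set.Icc a b, ‖τ s - τ t‖ ≤ K * |s - t|)
    (c : ℝ) (hc : c ∈ Set.Icc a b) :
    (b - a) - K^2*((b-c)^3 + (c-a)^3)/6 ≤ ⟪τ c, γ b - γ a⟫ := by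
  have hcont : ContinuousOn τ (Set.Icc a b) := by
    have : LipschitzOnWith (Real.toNNReal K) τ (Set.Icc a b) := by
      apply LipschitzOnWith.of_dist_le_mul
      intro x hx y hy
      rw [dist_eq_norm, dist_eq_norm, Real.coe_toNNReal K hK]
      exact hLip x hx y hy
    exact this.continuousOn
  have hτint : IntervalIntegrable τ volume a b :=
    (hcont.mono (by rw [Set.uIcc_of_le hab])).intervalIntegrable
  have hd : ∫ s in a..b, τ s = γ b - γ a := by
    apply intervalIntegral.integral_eq_sub_of_hasDerivAt
      (fun s hs => hγ s (by rwa [Set.uIcc_of_le hab] at hs)) hτint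
  have hinner : ⟪τ c, γ b - γ a⟫ = ∫ s in a..b, ⟪τ c, τ s⟫ := by
    rw [← hd, intervalIntegral.integral_of_le hab, intervalIntegral.integral_of_le hab]
    exact (integral_inner (𝕜 := ℝ) hτint.1 (τ c)).symm
  rw [hinner]
  have hcomp : ∫ s in a..b, (1 - K^2*(s-c)^2/2) = (b - a) - K^2*((b-c)^3 + (c-a)^3)/6 := by
    have h : ∀ s ∈ Set.uIcc a b, HasDerivAt (fun s => s - K^2*(s-c)^3/6)
        (1 - K^2*(s-c)^2/2) s := by
      intro s _
      have h1 : HasDerivAt (fun s : ℝ => s - K^2*(s-c)^3/6)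
          (1 - K^2*(3*(s-c)^2*1)/6) s :=
        (hasDerivAt_id s).sub ((((hasDerivAt_id s).sub_const c).pow 3).const_mul (K^2) |>.div_const 6)
      convert h1 using 1; ring
    rw [intervalIntegral.integral_eq_sub_of_hasDerivAt h
      (by apply Continuous.intervalIntegrable; fun_prop)]
    ring
  rw [← hcomp]
  apply intervalIntegral.integral_mono_on hab
    (by apply Continuous.intervalIntegrable; fun_prop)
  · exact (continuousOn_const.inner (hcont.mono (by rw [Set.uIcc_of_le hab]))).intervalIntegrable
  · intro s hs
    have h1 : ‖τ s - τ c‖ ≤ K * |s - c| := hLip s hs c hc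
    have h2 : ‖τ s - τ c‖^2 = ‖τ s‖^2 - 2*⟪τ s, τ c⟫ + ‖τ c‖^2 := norm_sub_sq_real _ _
    rw [hunit s hs, hunit c hc] at h2
    have h3 : ‖τ s - τ c‖^2 ≤ (K * |s - c|)^2 :=
      pow_le_pow_left₀ (norm_nonneg _) h1 2
    have h4 : (K * |s-c|)^2 = K^2 * (s-c)^2 := by rw [mul_pow, sq_abs]
    rw [real_inner_comm]
    nlinarith


private lemma cos_aux_small {L : ℝ} (h0 : 0 ≤ L) (h1 : L ≤ π) :
    Real.cos L ≤ 1 - L^2/6 := by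
  have hc := Real.cos_le_one_sub_mul_cos_sq (x := L) (by rwa [abs_of_nonneg h0])
  have hπ2 : π^2 ≤ 12 := by nlinarith [Real.pi_lt_d2, Real.pi_pos]
  have hπpos : (0:ℝ) < π^2 := by positivity
  have h2 : 2/π^2 * L^2 - L^2/6 = L^2 * (12 - π^2)/(6*π^2) := by field_simp; ring
  have h3 : (0:ℝ) ≤ L^2 * (12 - π^2)/(6*π^2) :=
    div_nonneg (mul_nonneg (sq_nonneg L) (by linarith)) (by linarith)
  linarith

private lemma cos_aux_big {L : ℝ} (h0 : 12/5 ≤ L) (h1 : L ≤ π) :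
    Real.cos L + L/2 ≤ 1 - L^2/24 := by
  have hcosub : Real.cos L ≤ -1 + (π - L)^2/2 := by
    have h : 1 - (π - L)^2/2 ≤ Real.cos (π - L) := Real.one_sub_sq_div_two_le_cos
    rw [Real.cos_pi_sub] at h; linarith
  nlinarith [Real.pi_gt_d6, Real.pi_lt_d6,
    mul_nonneg (by linarith : (0:ℝ) ≤ L - 12/5) (by linarith : (0:ℝ) ≤ π - L)]

set_option maxHeartbeats 1000000 in
theorem tangent_secant_angle_estimate (m : ℕ) (a b K : ℝ) (hab : a ≤ b)
    (γ τ : ℝ → EuclideanSpace ℝ (Fin m))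
    (hγ : ∀ t ∈ Set.Icc a b, HasDerivAt γ (τ t) t)
    (hunit : ∀ t ∈ Set.Icc a b, ‖τ t‖ = 1)
    (hLip : ∀ s ∈ Set.Icc a b, ∀ t ∈ Set.Icc a b, ‖τ s - τ t‖ ≤ K * |s - t|)
    (hne : γ b ≠ γ a) (t : ℝ) (ht : t ∈ Set.Icc a b) :
    Real.arccos (inner ℝ (τ t) (‖γ b - γ a‖⁻¹ • (γ b - γ a)) : ℝ) ≤ K * (b - a) := by
  have hlt : a < b := by
    rcases lt_or_eq_of_le hab with h | h
    · exact h
    · exact absurd (congrArg γ h.symm) hne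
  have hK : 0 ≤ K := by
    have h1 := hLip b (Set.right_mem_Icc.2 hab) a (Set.left_mem_Icc.2 hab)
    have h2 : (0:ℝ) ≤ ‖τ b - τ a‖ := norm_nonneg _
    rw [abs_of_nonneg (by linarith : (0:ℝ) ≤ b - a)] at h1
    nlinarith
  set L : ℝ := K * (b - a) with hLdef
  have hL0 : 0 ≤ L := mul_nonneg hK (by linarith)
  have hm : (a+b)/2 ∈ Set.Icc a b := ⟨by linarith, by linarith⟩
  obtain ⟨hta, htb⟩ := ht
  have ht' : t ∈ Set.Icc a b := ⟨hta, htb⟩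
  -- norm facts
  have hDpos : 0 < ‖γ b - γ a‖ := by
    rw [norm_sub_pos_iff]; exact hne
  have hcont : ContinuousOn τ (Set.Icc a b) := by
    have : LipschitzOnWith (Real.toNNReal K) τ (Set.Icc a b) := by
      apply LipschitzOnWith.of_dist_le_mul
      intro x hx y hy
      rw [dist_eq_norm, dist_eq_norm, Real.coe_toNNReal K hK]
      exact hLip x hx y hy
    exact this.continuousOn
  have hτint : IntervalIntegrable τ volume a b :=
    (hcont.mono (by rw [Set.uIcc_of_le hab])).intervalIntegrable
  have hd : ∫ s in a..b, τ s = γ b - γ a := by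
    apply intervalIntegral.integral_eq_sub_of_hasDerivAt
      (fun s hs => hγ s (by rwa [Set.uIcc_of_le hab] at hs)) hτint
  have hDle : ‖γ b - γ a‖ ≤ b - a := by
    rw [← hd]
    have h := intervalIntegral.norm_integral_le_of_norm_le_const (a := a) (b := b) (C := 1)
      (f := τ) (fun x hx => by
        rw [Set.uIoc_of_le hab] at hx
        rw [hunit x (Set.Ioc_subset_Icc_self hx)])
    rwa [abs_of_nonneg (by linarith : (0:ℝ) ≤ b - a), one_mul] at h
  -- inner product lower bounds
  have hNkey := aux_inner_lower m a b K hab hK γ τ hγ hunit hLip t ht'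
  have hMkey := aux_inner_lower m a b K hab hK γ τ hγ hunit hLip ((a+b)/2) hm
  have hN : (b-a)*(1 - L^2/6) ≤ ⟪τ t, γ b - γ a⟫ := by
    refine le_trans ?_ hNkey
    have h1 : (b-t)^3 + (t-a)^3 ≤ (b-a)^3 := by
      nlinarith [mul_nonneg (mul_nonneg (by linarith : (0:ℝ) ≤ b - t) (by linarith : (0:ℝ) ≤ t - a)) (by linarith : (0:ℝ) ≤ b - a)]
    have h2 : K^2*((b-t)^3 + (t-a)^3) ≤ K^2*(b-a)^3 :=
      mul_le_mul_of_nonneg_left h1 (sq_nonneg K)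
    have h3 : (b-a)*(1 - L^2/6) = (b-a) - K^2*(b-a)^3/6 := by rw [hLdef]; ring
    linarith
  have hM : (b-a)*(1 - L^2/24) ≤ ⟪τ ((a+b)/2), γ b - γ a⟫ := by
    refine le_trans (le_of_eq ?_) hMkey
    rw [hLdef]; ring
  have hMD : ⟪τ ((a+b)/2), γ b - γ a⟫ ≤ ‖γ b - γ a‖ := by
    have h := real_inner_le_norm (τ ((a+b)/2)) (γ b - γ a)
    rwa [hunit _ hm, one_mul] at h
  have hNM : ⟪τ ((a+b)/2), γ b - γ a⟫ - (L/2) * ‖γ b - γ a‖ ≤ ⟪τ t, γ b - γ a⟫ := by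
    have h1 : ⟪τ t - τ ((a+b)/2), γ b - γ a⟫
        = ⟪τ t, γ b - γ a⟫ - ⟪τ ((a+b)/2), γ b - γ a⟫ := inner_sub_left _ _ _
    have h2 := abs_real_inner_le_norm (τ t - τ ((a+b)/2)) (γ b - γ a)
    have h3 : ‖τ t - τ ((a+b)/2)‖ ≤ K * |t - (a+b)/2| := hLip t ht' _ hm
    have h4 : K * |t - (a+b)/2| ≤ L/2 := by
      have : |t - (a+b)/2| ≤ (b-a)/2 := abs_le.2 ⟨by linarith, by linarith⟩
      rw [hLdef]; nlinarith
    have h5 : ‖τ t - τ ((a+b)/2)‖ * ‖γ b - γ a‖ ≤ (L/2) * ‖γ b - γ a‖ :=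
      mul_le_mul_of_nonneg_right (h3.trans h4) (norm_nonneg _)
    have h6 := neg_abs_le ⟪τ t - τ ((a+b)/2), γ b - γ a⟫
    linarith [abs_nonneg ⟪τ t - τ ((a+b)/2), γ b - γ a⟫]
  have hCS : |⟪τ t, γ b - γ a⟫| ≤ ‖γ b - γ a‖ := by
    have h := abs_real_inner_le_norm (τ t) (γ b - γ a)
    rwa [hunit t ht', one_mul] at h
  -- rewrite the goal
  rw [real_inner_smul_right]
  rcases le_or_gt π L with hπ | hπ
  · exact (Real.arccos_le_pi _).trans hπ
  · -- main estimate : ‖d‖ * cos L ≤ N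
    have hkey : ‖γ b - γ a‖ * Real.cos L ≤ ⟪τ t, γ b - γ a⟫ := by
      rcases le_or_gt L (12/5) with hsmall | hbig
      · rcases le_or_gt (Real.cos L) 0 with hc0 | hc0
        · have hL2 : L^2 ≤ (12/5)^2 := by nlinarith
          have h0 : (0:ℝ) ≤ (b-a)*(1 - L^2/6) := by nlinarith
          have h00 : ‖γ b - γ a‖ * Real.cos L ≤ 0 :=
            mul_nonpos_iff.2 (Or.inl ⟨norm_nonneg _, hc0⟩)
          linarith
        · have hcos6 : Real.cos L ≤ 1 - L^2/6 := cos_aux_small hL0 hπ.le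
          have c1 : ‖γ b - γ a‖ * Real.cos L ≤ (b-a) * Real.cos L :=
            mul_le_mul_of_nonneg_right hDle hc0.le
          have c2 : (b-a) * Real.cos L ≤ (b-a) * (1 - L^2/6) :=
            mul_le_mul_of_nonneg_left hcos6 (by linarith)
          linarith
      · have hcl : -1 ≤ Real.cos L := Real.neg_one_le_cos L
        have hsum0 : 0 ≤ Real.cos L + L/2 := by linarith
        have hineq : Real.cos L + L/2 ≤ 1 - L^2/24 := cos_aux_big hbig.le hπ.le
        have h5 : ‖γ b - γ a‖ * (Real.cos L + L/2) ≤ (b-a) * (Real.cos L + L/2) :=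
          mul_le_mul_of_nonneg_right hDle hsum0
        have h6 : (b-a)*(Real.cos L + L/2) ≤ (b-a)*(1 - L^2/24) :=
          mul_le_mul_of_nonneg_left hineq (by linarith)
        have h7 : ‖γ b - γ a‖ * Real.cos L + L/2 * ‖γ b - γ a‖
            = ‖γ b - γ a‖ * (Real.cos L + L/2) := by ring
        linarith
    -- conclude via arccos
    have hx1 : |‖γ b - γ a‖⁻¹ * ⟪τ t, γ b - γ a⟫| ≤ 1 := by
      rw [abs_mul, abs_of_nonneg (inv_nonneg.2 hDpos.le)]
      calc ‖γ b - γ a‖⁻¹ * |⟪τ t, γ b - γ a⟫| ≤ ‖γ b - γ a‖⁻¹ * ‖γ b - γ a‖ :=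
            mul_le_mul_of_nonneg_left hCS (inv_nonneg.2 hDpos.le)
        _ = 1 := inv_mul_cancel₀ hDpos.ne'
    obtain ⟨hxa, hxb⟩ := abs_le.1 hx1
    have hcosx : Real.cos L ≤ ‖γ b - γ a‖⁻¹ * ⟪τ t, γ b - γ a⟫ := by
      rw [inv_mul_eq_div, le_div_iff₀ hDpos]
      linarith [hkey]
    by_contra hcon
    push_neg at hcon
    have h1 : Real.cos (Real.arccos (‖γ b - γ a‖⁻¹ * ⟪τ t, γ b - γ a⟫)) < Real.cos L :=
      Real.strictAntiOn_cos ⟨hL0, hπ.le⟩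
        ⟨Real.arccos_nonneg _, Real.arccos_le_pi _⟩ hcon
    rw [Real.cos_arccos hxa hxb] at h1
    linarith
end

section
/- Let f : [a, c] → ℝ be C³, let b ∈ (a, c), and set h₁ = b - a, h₂ = c - b. Then |(2/(h₁ + h₂))·((f(c) - f(b))/h₂ - (f(b) - f(a))/h₁) - f''(b)| ≤ (1/2)·‖f'''‖_{L^∞([a,c])}·(c - a). -/
open intervalIntegral in
lemma taylor3_aux (x₀ x M : ℝ) (f f' f'' f''' : ℝ → ℝ)
    (hf : ∀ t ∈ Set.uIcc x₀ x, HasDerivAt f (f' t) t)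
    (hf' : ∀ t ∈ Set.uIcc x₀ x, HasDerivAt f' (f'' t) t)
    (hf'' : ∀ t ∈ Set.uIcc x₀ x, HasDerivAt f'' (f''' t) t)
    (hcont : ContinuousOn f''' (Set.uIcc x₀ x))
    (hM : ∀ t ∈ Set.uIcc x₀ x, |f''' t| ≤ M) :
    |f x - f x₀ - f' x₀ * (x - x₀) - f'' x₀ * (x - x₀) ^ 2 / 2|
      ≤ M * |x - x₀| ^ 3 / 6 := by
  set g : ℝ → ℝ := fun t => f x - f t - f' t * (x - t) - f'' t * (x - t) ^ 2 / 2 with hgdef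
  have hg : ∀ t ∈ Set.uIcc x₀ x, HasDerivAt g (-(f''' t * (x - t) ^ 2 / 2)) t := by
    intro t ht
    have h1 := hf t ht
    have h2 := hf' t ht
    have h3 := hf'' t ht
    have hxt : HasDerivAt (fun s : ℝ => x - s) (-1) t := by
      simpa using (hasDerivAt_id t).const_sub x
    have H := (((hasDerivAt_const t (f x)).sub h1).sub (h2.mul hxt)).sub
      ((h3.mul (hxt.pow 2)).div_const 2)
    refine H.congr_deriv ?_
    simp only [Pi.pow_apply]
    push_cast
    ring
  have hcg : ContinuousOn (fun t => -(f''' t * (x - t) ^ 2 / 2)) (Set.uIcc x₀ x) := by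
    exact ((hcont.mul ((continuousOn_const.sub continuousOn_id).pow 2)).div_const 2).neg
  have hint : IntervalIntegrable (fun t => -(f''' t * (x - t) ^ 2 / 2)) MeasureTheory.volume x₀ x :=
    hcg.intervalIntegrable
  have key : (∫ t in x₀..x, -(f''' t * (x - t) ^ 2 / 2)) = g x - g x₀ :=
    intervalIntegral.integral_eq_sub_of_hasDerivAt hg hint
  have hgx : g x = 0 := by simp [hgdef]
  have hgx0 : g x₀ = ∫ t in x₀..x, f''' t * (x - t) ^ 2 / 2 := by
    have := key
    rw [hgx, intervalIntegral.integral_neg] at this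
    linarith
  have hMnn : 0 ≤ M := le_trans (abs_nonneg _) (hM x₀ Set.left_mem_uIcc)
  have hbnd : ‖∫ t in x₀..x, f''' t * (x - t) ^ 2 / 2‖
      ≤ |∫ t in x₀..x, M * (x - t) ^ 2 / 2| := by
    apply intervalIntegral.norm_integral_le_abs_of_norm_le
    · refine (MeasureTheory.ae_restrict_iff' measurableSet_uIoc).2 ?_
      filter_upwards with t ht
      have htm : t ∈ Set.uIcc x₀ x := Set.uIoc_subset_uIcc ht
      have := hM t htm
      have h2 : (0:ℝ) ≤ (x - t) ^ 2 := sq_nonneg _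
      rw [Real.norm_eq_abs, abs_div, abs_mul, abs_pow, sq_abs, abs_two]
      gcongr
    · exact ((continuousOn_const.mul ((continuousOn_const.sub continuousOn_id).pow 2)).div_const
        2).intervalIntegrable
  have hcomp : (∫ t in x₀..x, M * (x - t) ^ 2 / 2) = M * (x - x₀) ^ 3 / 6 := by
    have h1 : (∫ t in x₀..x, M * (x - t) ^ 2 / 2)
        = (M / 2) * ∫ t in x₀..x, (x - t) ^ 2 := by
      rw [← intervalIntegral.integral_const_mul]
      congr 1; funext t; ring
    have h2 : (∫ t in x₀..x, (x - t) ^ 2) = ∫ u in (x - x)..(x - x₀), u ^ 2 :=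
      intervalIntegral.integral_comp_sub_left (fun u => u ^ 2) x
    rw [h1, h2]
    simp [integral_pow]
    ring
  have habs : |M * (x - x₀) ^ 3 / 6| = M * |x - x₀| ^ 3 / 6 := by
    rw [abs_div, abs_mul, abs_of_nonneg hMnn, ← abs_pow]
    norm_num
  calc |f x - f x₀ - f' x₀ * (x - x₀) - f'' x₀ * (x - x₀) ^ 2 / 2|
      = ‖∫ t in x₀..x, f''' t * (x - t) ^ 2 / 2‖ := by rw [← hgx0]; rfl
    _ ≤ |∫ t in x₀..x, M * (x - t) ^ 2 / 2| := hbnd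
    _ = M * |x - x₀| ^ 3 / 6 := by rw [hcomp, habs]

theorem second_difference_consistency (a b c M : ℝ) (hab : a < b) (hbc : b < c)
    (f f' f'' f''' : ℝ → ℝ)
    (hf : ∀ t ∈ Set.Icc a c, HasDerivAt f (f' t) t)
    (hf' : ∀ t ∈ Set.Icc a c, HasDerivAt f' (f'' t) t)
    (hf'' : ∀ t ∈ Set.Icc a c, HasDerivAt f'' (f''' t) t)
    (hcont : ContinuousOn f''' (Set.Icc a c))
    (hM : ∀ t ∈ Set.Icc a c, |f''' t| ≤ M) :
    |(2 / ((b - a) + (c - b))) * ((f c - f b) / (c - b) - (f b - f a) / (b - a)) - f'' b|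
      ≤ (1 / 2) * M * (c - a) := by
  have hsub1 : Set.uIcc b a ⊆ Set.Icc a c := by
    rw [Set.uIcc_comm, Set.uIcc_of_le hab.le]
    exact Set.Icc_subset_Icc le_rfl hbc.le
  have hsub2 : Set.uIcc b c ⊆ Set.Icc a c := by
    rw [Set.uIcc_of_le hbc.le]
    exact Set.Icc_subset_Icc hab.le le_rfl
  have hR₁ := taylor3_aux b a M f f' f'' f'''
    (fun t ht => hf t (hsub1 ht)) (fun t ht => hf' t (hsub1 ht))
    (fun t ht => hf'' t (hsub1 ht)) (hcont.mono hsub1) (fun t ht => hM t (hsub1 ht))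
  have hR₂ := taylor3_aux b c M f f' f'' f'''
    (fun t ht => hf t (hsub2 ht)) (fun t ht => hf' t (hsub2 ht))
    (fun t ht => hf'' t (hsub2 ht)) (hcont.mono hsub2) (fun t ht => hM t (hsub2 ht))
  have hMnn : 0 ≤ M := le_trans (abs_nonneg _) (hM b ⟨hab.le, hbc.le⟩)
  set h₁ : ℝ := b - a with hh1
  set h₂ : ℝ := c - b with hh2
  have hh1p : 0 < h₁ := by simp [hh1]; linarith
  have hh2p : 0 < h₂ := by simp [hh2]; linarith
  have habs1 : |a - b| = h₁ := by rw [abs_sub_comm, abs_of_pos hh1p]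
  have habs2 : |c - b| = h₂ := abs_of_pos hh2p
  rw [habs1] at hR₁
  rw [habs2] at hR₂
  set R₁ : ℝ := f a - f b - f' b * (a - b) - f'' b * (a - b) ^ 2 / 2 with hR1def
  set R₂ : ℝ := f c - f b - f' b * (c - b) - f'' b * (c - b) ^ 2 / 2 with hR2def
  have hkey : (2 / (h₁ + h₂)) * ((f c - f b) / h₂ - (f b - f a) / h₁) - f'' b
      = (2 / (h₁ + h₂)) * (R₂ / h₂ + R₁ / h₁) := by
    have hs : h₁ + h₂ ≠ 0 := by positivity
    rw [hR1def, hR2def]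
    field_simp
    ring
  rw [hkey]
  have hs : (0:ℝ) < h₁ + h₂ := by linarith
  have hbound : |(2 / (h₁ + h₂)) * (R₂ / h₂ + R₁ / h₁)|
      ≤ (2 / (h₁ + h₂)) * (M * h₂ ^ 3 / 6 / h₂ + M * h₁ ^ 3 / 6 / h₁) := by
    rw [abs_mul, abs_of_pos (by positivity : (0:ℝ) < 2 / (h₁ + h₂))]
    gcongr
    calc |R₂ / h₂ + R₁ / h₁| ≤ |R₂ / h₂| + |R₁ / h₁| := abs_add_le _ _
      _ = |R₂| / h₂ + |R₁| / h₁ := by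
          rw [abs_div, abs_div, abs_of_pos hh1p, abs_of_pos hh2p]
      _ ≤ M * h₂ ^ 3 / 6 / h₂ + M * h₁ ^ 3 / 6 / h₁ := by gcongr
  refine hbound.trans ?_
  have hca : c - a = h₁ + h₂ := by rw [hh1, hh2]; ring
  rw [hca]
  rw [div_mul_eq_mul_div, div_le_iff₀ hs]
  have e1 : M * h₂ ^ 3 / 6 / h₂ = M * h₂ ^ 2 / 6 := by
    field_simp
  have e2 : M * h₁ ^ 3 / 6 / h₁ = M * h₁ ^ 2 / 6 := by
    field_simp
  rw [e1, e2]
  clear_value h₁ h₂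
  nlinarith [mul_nonneg hMnn (mul_pos hh1p hh2p).le, mul_nonneg hMnn (sq_nonneg h₁),
    mul_nonneg hMnn (sq_nonneg h₂)]
end

section
/- Let X, Y be Banach spaces, U ⊆ X open and convex, x₀ ∈ U, and F : U → Y continuously Fréchet differentiable. Suppose there exist μ ≥ 0, ν ≥ 0, and 0 < r < 1/(μν) such that: (1) there is a bounded linear right inverse R : Y → X of DF(x₀) with ‖R‖ ≤ μ; (2) the slice S = closedBall(x₀, r) ∩ (x₀ + range R) is contained in U; (3) ‖DF(x̃) - DF(x)‖ ≤ ν‖x̃ - x‖ for all x̃, x ∈ S. Then with ε = r/(2μ), for each b ∈ Y with ‖F(x₀) - b‖ < ε there exists a ∈ X with ‖a - x₀‖ ≤ r, F(a) = b, and moreover ‖a - x₀‖ ≤ 2μ‖F(x₀) - b‖. -/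
lemma quad_taylor {X Y : Type*} [NormedAddCommGroup X] [NormedSpace ℝ X]
    [NormedAddCommGroup Y] [NormedSpace ℝ Y]
    (F : X → Y) (DF : X → X →L[ℝ] Y) (x₀ v : X) (ν : ℝ)
    (hder : ∀ t ∈ Set.Icc (0:ℝ) 1, HasFDerivAt F (DF (x₀ + t • v)) (x₀ + t • v))
    (hlip : ∀ t ∈ Set.Icc (0:ℝ) 1, ‖DF (x₀ + t • v) - DF x₀‖ ≤ ν * (t * ‖v‖)) :
    ‖F (x₀ + v) - F x₀ - DF x₀ v‖ ≤ ν / 2 * ‖v‖ ^ 2 := by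
  set f : ℝ → Y := fun t => F (x₀ + t • v) - F x₀ - t • DF x₀ v with hfdef
  set f' : ℝ → Y := fun t => (DF (x₀ + t • v) - DF x₀) v with hf'def
  have hcurve : ∀ t : ℝ, HasDerivAt (fun s : ℝ => x₀ + s • v) v t := by
    intro t
    simpa using ((hasDerivAt_id t).smul_const v).const_add x₀
  have hfd : ∀ t ∈ Set.Icc (0:ℝ) 1, HasDerivAt f (f' t) t := by
    intro t ht
    have h1 : HasDerivAt (fun s : ℝ => F (x₀ + s • v)) (DF (x₀ + t • v) v) t :=
      (hder t ht).comp_hasDerivAt t (hcurve t)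
    have h2 : HasDerivAt (fun s : ℝ => s • DF x₀ v) (DF x₀ v) t := by
      simpa using (hasDerivAt_id t).smul_const (DF x₀ v)
    have := (h1.sub_const (F x₀)).sub h2
    simpa [hfdef, hf'def, ContinuousLinearMap.sub_apply, Pi.sub_def] using this
  set B : ℝ → ℝ := fun s => ν / 2 * ‖v‖ ^ 2 * s ^ 2 with hBdef
  have hB : ∀ t : ℝ, HasDerivAt B (ν * ‖v‖ ^ 2 * t) t := by
    intro t
    have := (hasDerivAt_pow 2 t).const_mul (ν / 2 * ‖v‖ ^ 2)
    refine this.congr_deriv ?_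
    ring
  have bound : ∀ t ∈ Set.Ico (0:ℝ) 1, ‖f' t‖ ≤ ν * ‖v‖ ^ 2 * t := by
    intro t ht
    calc ‖f' t‖ ≤ ‖DF (x₀ + t • v) - DF x₀‖ * ‖v‖ :=
          (DF (x₀ + t • v) - DF x₀).le_opNorm v
      _ ≤ ν * (t * ‖v‖) * ‖v‖ := by
          apply mul_le_mul_of_nonneg_right (hlip t ⟨ht.1, ht.2.le⟩) (norm_nonneg v)
      _ = ν * ‖v‖ ^ 2 * t := by ring
  have hcontf : ContinuousOn f (Set.Icc 0 1) := fun t ht =>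
    (hfd t ht).continuousAt.continuousWithinAt
  have hf'w : ∀ t ∈ Set.Ico (0:ℝ) 1, HasDerivWithinAt f (f' t) (Set.Ici t) t := fun t ht =>
    (hfd t (Set.Ico_subset_Icc_self ht)).hasDerivWithinAt
  have ha : ‖f 0‖ ≤ B 0 := by simp [hfdef, hBdef]
  have := image_norm_le_of_norm_deriv_right_le_deriv_boundary hcontf hf'w ha hB bound
    (Set.right_mem_Icc.2 zero_le_one)
  simpa [hfdef, hBdef] using this

theorem newton_kantorovich_right_inverse_variant
    {X Y : Type*} [NormedAddCommGroup X] [NormedSpace ℝ X] [CompleteSpace X]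
    [NormedAddCommGroup Y] [NormedSpace ℝ Y] [CompleteSpace Y]
    (U : Set X) (hU : IsOpen U) (hconv : Convex ℝ U) (x₀ : X) (hx₀ : x₀ ∈ U)
    (F : X → Y) (DF : X → X →L[ℝ] Y)
    (hdiff : ∀ x ∈ U, HasFDerivAt F (DF x) x) (hcont : ContinuousOn DF U)
    (μ ν r : ℝ) (hμ : 0 ≤ μ) (hν : 0 ≤ ν) (hr : 0 < r) (hrμν : r * (μ * ν) < 1)
    (R : Y →L[ℝ] X) (hRinv : ∀ y : Y, DF x₀ (R y) = y) (hRnorm : ‖R‖ ≤ μ)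
    (S : Set X) (hS : S = {x | x ∈ Metric.closedBall x₀ r ∧ x - x₀ ∈ Set.range R})
    (hSU : S ⊆ U)
    (hLip : ∀ x' ∈ S, ∀ x ∈ S, ‖DF x' - DF x‖ ≤ ν * ‖x' - x‖) :
    ∀ b : Y, ‖F x₀ - b‖ < r / (2 * μ) →
      ∃ a : X, ‖a - x₀‖ ≤ r ∧ F a = b ∧ ‖a - x₀‖ ≤ 2 * μ * ‖F x₀ - b‖ := by
  intro b hb
  rcases eq_or_lt_of_le hμ with hμ0 | hμpos
  · exfalso
    rw [← hμ0] at hb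
    simp only [mul_zero, div_zero] at hb
    exact absurd hb (norm_nonneg _).not_gt
  set ε := ‖F x₀ - b‖ with hεdef
  have hε : 0 ≤ ε := norm_nonneg _
  set ρ := 2 * μ * ε with hρdef
  have hρ0 : 0 ≤ ρ := by positivity
  have hρr : ρ < r := by
    have h2μ : (0:ℝ) < 2 * μ := by linarith
    have := (lt_div_iff₀' h2μ).1 hb
    linarith
  set κ := μ * ν * ρ with hκdef
  have hκ0 : 0 ≤ κ := by positivity
  have hκ1 : κ < 1 := by
    calc κ ≤ μ * ν * r := by
          apply mul_le_mul_of_nonneg_left hρr.le (by positivity)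
      _ < 1 := by rw [mul_comm (μ * ν) r]; exact hrμν
  -- membership of x₀ in S
  have hx₀S : x₀ ∈ S := by
    rw [hS]
    exact ⟨Metric.mem_closedBall_self hr.le, ⟨0, by simp⟩⟩
  -- the slice is convex
  have hsliceconv : Convex ℝ {x : X | x - x₀ ∈ Set.range R} := by
    intro p hp q hq a c ha hc hac
    obtain ⟨u, hu⟩ := hp
    obtain ⟨v, hv⟩ := hq
    refine ⟨a • u + c • v, ?_⟩
    have h1 : a • x₀ + c • x₀ = x₀ := by rw [← add_smul, hac, one_smul]
    rw [map_add, map_smul, map_smul, hu, hv, smul_sub, smul_sub]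
    rw [show (a • p + c • q - x₀ : X) = a • p + c • q - (a • x₀ + c • x₀) by rw [h1]]
    abel
  set T := Metric.closedBall x₀ ρ ∩ {x : X | x - x₀ ∈ Set.range R} with hTdef
  have hTconv : Convex ℝ T := (convex_closedBall _ _).inter hsliceconv
  have hTS : T ⊆ S := by
    rw [hS]
    intro p hp
    exact ⟨Metric.closedBall_subset_closedBall hρr.le hp.1, hp.2⟩
  have hTder : ∀ p ∈ T, HasFDerivWithinAt F (DF p) T p := fun p hp =>
    (hdiff p (hSU (hTS hp))).hasFDerivWithinAt
  have hTbound : ∀ p ∈ T, ‖DF p - DF x₀‖ ≤ ν * ρ := by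
    intro p hp
    have h1 := hLip p (hTS hp) x₀ hx₀S
    have h2 : ‖p - x₀‖ ≤ ρ := by
      have := hp.1
      rwa [Metric.mem_closedBall, dist_eq_norm] at this
    calc ‖DF p - DF x₀‖ ≤ ν * ‖p - x₀‖ := h1
      _ ≤ ν * ρ := by apply mul_le_mul_of_nonneg_left h2 hν
  have hMVT : ∀ p ∈ T, ∀ q ∈ T, ‖F q - F p - DF x₀ (q - p)‖ ≤ ν * ρ * ‖q - p‖ :=
    fun p hp q hq => hTconv.norm_image_sub_le_of_norm_hasFDerivWithin_le' hTder hTbound hp hq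
  -- quadratic Taylor estimate on T
  have hTaylor : ∀ p ∈ T, ‖F p - F x₀ - DF x₀ (p - x₀)‖ ≤ ν / 2 * ‖p - x₀‖ ^ 2 := by
    intro p hp
    obtain ⟨u, hu⟩ := hp.2
    have hpball : ‖p - x₀‖ ≤ ρ := by
      have := hp.1
      rwa [Metric.mem_closedBall, dist_eq_norm] at this
    have hseg : ∀ t ∈ Set.Icc (0:ℝ) 1, x₀ + t • (p - x₀) ∈ S := by
      intro t ht
      rw [hS]
      constructor
      · rw [Metric.mem_closedBall, dist_eq_norm, add_sub_cancel_left, norm_smul,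
          Real.norm_of_nonneg ht.1]
        calc t * ‖p - x₀‖ ≤ 1 * ρ := by
              apply mul_le_mul ht.2 hpball (norm_nonneg _) zero_le_one
          _ ≤ r := by linarith
      · exact ⟨t • u, by rw [map_smul, hu, add_sub_cancel_left]⟩
    have h := quad_taylor F DF x₀ (p - x₀) ν
      (fun t ht => hdiff _ (hSU (hseg t ht)))
      (fun t ht => by
        have h1 := hLip _ (hseg t ht) x₀ hx₀S
        rwa [add_sub_cancel_left, norm_smul, Real.norm_of_nonneg ht.1] at h1)
    rwa [add_sub_cancel] at h
  -- the iteration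
  set w : ℕ → Y := fun n => n.rec 0 (fun _ wn => wn + (b - F (x₀ + R wn))) with hwdef
  set x : ℕ → X := fun n => x₀ + R (w n) with hxdef
  have hwsucc : ∀ n, w (n + 1) = w n + (b - F (x n)) := fun n => rfl
  have hxsub : ∀ n, x n - x₀ = R (w n) := fun n => add_sub_cancel_left _ _
  have hDFx : ∀ n, DF x₀ (x n - x₀) = w n := fun n => by rw [hxsub, hRinv]
  have hxstep : ∀ n, x (n + 1) - x n = R (b - F (x n)) := by
    intro n
    rw [show x (n + 1) - x n = R (w (n + 1)) - R (w n) by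
      simp only [hxdef]; abel]
    rw [hwsucc, map_add, add_sub_cancel_left]
  -- key induction
  have key : ∀ n, ‖x n - x₀‖ ≤ ρ ∧ ‖F (x n) - b‖ ≤ κ ^ n * ε := by
    intro n
    induction n with
    | zero =>
      have hx0 : x 0 = x₀ := by simp [hxdef, show w 0 = (0 : Y) from rfl]
      refine ⟨?_, ?_⟩
      · rw [hx0, sub_self, norm_zero]; exact hρ0
      · rw [hx0, pow_zero, one_mul]
    | succ n ih =>
      obtain ⟨hsn, hεn⟩ := ih
      have hxnT : x n ∈ T := by
        refine ⟨?_, ⟨w n, (hxsub n).symm⟩⟩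
        rw [Metric.mem_closedBall, dist_eq_norm]
        exact hsn
      have hεnn : 0 ≤ ‖F (x n) - b‖ := norm_nonneg _
      -- bound on ‖x (n+1) - x₀‖
      have hs1 : ‖x (n + 1) - x₀‖ ≤ ρ := by
        have hrepr : x (n + 1) - x₀ =
            R ((b - F x₀) - (F (x n) - F x₀ - DF x₀ (x n - x₀))) := by
          rw [hDFx n, hxsub (n + 1), hwsucc n]
          congr 1
          abel
        have h1 : ‖x (n + 1) - x₀‖ ≤ μ * (ε + ν / 2 * ‖x n - x₀‖ ^ 2) := by
          rw [hrepr]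
          calc ‖R _‖ ≤ ‖R‖ * ‖(b - F x₀) - (F (x n) - F x₀ - DF x₀ (x n - x₀))‖ :=
                R.le_opNorm _
            _ ≤ μ * (ε + ν / 2 * ‖x n - x₀‖ ^ 2) := by
                apply mul_le_mul hRnorm ?_ (norm_nonneg _) hμ
                calc ‖(b - F x₀) - (F (x n) - F x₀ - DF x₀ (x n - x₀))‖
                    ≤ ‖b - F x₀‖ + ‖F (x n) - F x₀ - DF x₀ (x n - x₀)‖ := norm_sub_le _ _
                  _ ≤ ε + ν / 2 * ‖x n - x₀‖ ^ 2 := by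
                      have := hTaylor (x n) hxnT
                      have hbF : ‖b - F x₀‖ = ε := by rw [hεdef, norm_sub_rev]
                      linarith
        have hsnn : 0 ≤ ‖x n - x₀‖ := norm_nonneg _
        nlinarith [mul_nonneg (mul_nonneg hμ hν) (mul_nonneg (sub_nonneg.2 hsn)
          (add_nonneg hsnn hρ0)), mul_nonneg hμ hε]
      have hxn1T : x (n + 1) ∈ T := by
        refine ⟨?_, ⟨w (n + 1), (hxsub (n + 1)).symm⟩⟩
        rw [Metric.mem_closedBall, dist_eq_norm]
        exact hs1
      refine ⟨hs1, ?_⟩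
      -- residual bound
      have hres : F (x (n + 1)) - b =
          F (x (n + 1)) - F (x n) - DF x₀ (x (n + 1) - x n) := by
        rw [hxstep, hRinv]
        abel
      have hd : ‖x (n + 1) - x n‖ ≤ μ * ‖F (x n) - b‖ := by
        rw [hxstep]
        calc ‖R (b - F (x n))‖ ≤ ‖R‖ * ‖b - F (x n)‖ := R.le_opNorm _
          _ ≤ μ * ‖F (x n) - b‖ := by
              rw [norm_sub_rev]
              apply mul_le_mul_of_nonneg_right hRnorm (norm_nonneg _)
      calc ‖F (x (n + 1)) - b‖ = ‖F (x (n + 1)) - F (x n) - DF x₀ (x (n + 1) - x n)‖ := by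
            rw [hres]
        _ ≤ ν * ρ * ‖x (n + 1) - x n‖ := hMVT (x n) hxnT (x (n + 1)) hxn1T
        _ ≤ ν * ρ * (μ * ‖F (x n) - b‖) := by
            apply mul_le_mul_of_nonneg_left hd (by positivity)
        _ = κ * ‖F (x n) - b‖ := by rw [hκdef]; ring
        _ ≤ κ * (κ ^ n * ε) := by apply mul_le_mul_of_nonneg_left hεn hκ0
        _ = κ ^ (n + 1) * ε := by ring
  -- Cauchy sequence
  have hwCauchy : CauchySeq w := by
    apply cauchySeq_of_le_geometric κ ε hκ1
    intro n
    have hst : w (n + 1) - w n = b - F (x n) := by rw [hwsucc]; abel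
    rw [dist_eq_norm', hst, norm_sub_rev]
    calc ‖F (x n) - b‖ ≤ κ ^ n * ε := (key n).2
      _ = ε * κ ^ n := by ring
  obtain ⟨wl, hwl⟩ := cauchySeq_tendsto_of_complete hwCauchy
  set a := x₀ + R wl with hadef
  have hxa : Filter.Tendsto x Filter.atTop (nhds a) := by
    have h1 : Filter.Tendsto (fun n => R (w n)) Filter.atTop (nhds (R wl)) :=
      (R.continuous.tendsto wl).comp hwl
    simpa [hxdef, hadef] using h1.const_add x₀
  have hanorm : ‖a - x₀‖ ≤ ρ := by
    have h1 : Filter.Tendsto (fun n => ‖x n - x₀‖) Filter.atTop (nhds ‖a - x₀‖) :=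
      ((hxa.sub tendsto_const_nhds).norm)
    exact le_of_tendsto h1 (Filter.Eventually.of_forall fun n => (key n).1)
  have haS : a ∈ S := by
    rw [hS]
    constructor
    · rw [Metric.mem_closedBall, dist_eq_norm]
      linarith
    · exact ⟨wl, by rw [hadef, add_sub_cancel_left]⟩
  have hFxb : Filter.Tendsto (fun n => F (x n)) Filter.atTop (nhds b) := by
    rw [tendsto_iff_norm_sub_tendsto_zero]
    have hgeo : Filter.Tendsto (fun n => κ ^ n * ε) Filter.atTop (nhds 0) := by
      have := (tendsto_pow_atTop_nhds_zero_of_lt_one hκ0 hκ1).mul_const ε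
      simpa using this
    exact squeeze_zero (fun n => norm_nonneg _) (fun n => (key n).2) hgeo
  have hFxa : Filter.Tendsto (fun n => F (x n)) Filter.atTop (nhds (F a)) :=
    ((hdiff a (hSU haS)).continuousAt.tendsto).comp hxa
  have hFab : F a = b := tendsto_nhds_unique hFxa hFxb
  exact ⟨a, by linarith, hFab, hanorm⟩
end

section
/- Let X, Y be Banach spaces, U ⊆ X open, x₀ ∈ U, F ∈ C¹(U; Y) with DF(x₀) continuously invertible. Assume there are constants λ, μ, ν with 0 < λμν < 1/2, ‖DF(x₀)⁻¹F(x₀)‖ ≤ λ, ‖DF(x₀)⁻¹‖ ≤ μ, ‖DF(x̃) - DF(x)‖ ≤ ν‖x̃ - x‖ for all x̃, x in the open ball B(x₀, r) where r = 1/(μν), and B(x₀, r) ⊆ U. Then setting r₋ = r(1 - √(1 - 2λμν)) ≤ 2λ, there exists a point a in the closed ball B̄(x₀, r₋) with F(a) = 0, and a is the unique zero of F in B(x₀, r). -/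
set_option maxHeartbeats 4000000

open Metric Set

theorem newton_kantorovich
    {X Y : Type*} [NormedAddCommGroup X] [NormedSpace ℝ X] [CompleteSpace X]
    [NormedAddCommGroup Y] [NormedSpace ℝ Y] [CompleteSpace Y]
    (U : Set X) (hU : IsOpen U) (x₀ : X) (hx₀ : x₀ ∈ U)
    (F : X → Y) (DF : X → X →L[ℝ] Y)
    (hdiff : ∀ x ∈ U, HasFDerivAt F (DF x) x) (hcont : ContinuousOn DF U)
    (DF0 : X ≃L[ℝ] Y) (hDF0 : (DF0 : X →L[ℝ] Y) = DF x₀)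
    (lam μ ν r : ℝ) (hr : r = 1 / (μ * ν))
    (hpos : 0 < lam * μ * ν) (hhalf : lam * μ * ν < 1 / 2)
    (hball : Metric.ball x₀ r ⊆ U)
    (hlam : ‖DF0.symm (F x₀)‖ ≤ lam)
    (hμ : ‖(DF0.symm : Y →L[ℝ] X)‖ ≤ μ)
    (hLip : ∀ x' ∈ Metric.ball x₀ r, ∀ x ∈ Metric.ball x₀ r,
      ‖DF x' - DF x‖ ≤ ν * ‖x' - x‖) :
    r * (1 - Real.sqrt (1 - 2 * (lam * μ * ν))) ≤ 2 * lam ∧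
    ∃ a ∈ Metric.closedBall x₀ (r * (1 - Real.sqrt (1 - 2 * (lam * μ * ν)))),
      F a = 0 ∧ ∀ x ∈ Metric.ball x₀ r, F x = 0 → x = a := by
  -- basic positivity
  have hμnn : 0 ≤ μ := le_trans (norm_nonneg _) hμ
  have hlamnn : 0 ≤ lam := le_trans (norm_nonneg _) hlam
  have hμ0 : 0 < μ := by
    rcases lt_or_eq_of_le hμnn with h' | h'
    · exact h'
    · exfalso; rw [← h'] at hpos; simp at hpos
  have hlam0 : 0 < lam := by
    rcases lt_or_eq_of_le hlamnn with h' | h'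
    · exact h'
    · exfalso; rw [← h'] at hpos; simp at hpos
  have hν0 : 0 < ν := by nlinarith [mul_pos hlam0 hμ0]
  have hr0 : 0 < r := by rw [hr]; positivity
  set h : ℝ := lam * μ * ν with hh
  set s : ℝ := Real.sqrt (1 - 2 * h) with hs
  have h2h : 0 < 1 - 2 * h := by linarith
  have hs0 : 0 < s := Real.sqrt_pos.2 h2h
  have hssq : s ^ 2 = 1 - 2 * h := Real.sq_sqrt (le_of_lt h2h)
  have hs1 : s < 1 := by nlinarith
  set ρ : ℝ := r * (1 - s) with hρ
  have hρ0 : 0 < ρ := by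
    apply mul_pos hr0; linarith
  have hρr : ρ < r := by
    have := mul_lt_mul_of_pos_left (show 1 - s < 1 by linarith) hr0
    simpa [hρ] using this
  have hμν : μ * ν * r = 1 := by
    rw [hr]; field_simp
  -- the key quadratic identity: μ*ν/2 * ρ^2 + lam = ρ
  have hquad : μ * ν / 2 * ρ ^ 2 + lam = ρ := by
    have hean : h = lam * (μ * ν) := by ring
    have : ρ = (1 - s) * r := by rw [hρ]; ring
    have hmn : μ * ν > 0 := mul_pos hμ0 hν0
    have hre : r = 1 / (μ * ν) := hr
    rw [hρ]
    field_simp [hre]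
    linear_combination (r*(1-s)^2 - 2*lam) * hμν + r * hssq - 2*r*hh
  have hk1 : μ * ν * ρ = 1 - s := by
    rw [hρ]; nlinarith [hμν]
  -- part 1
  have part1 : ρ ≤ 2 * lam := by
    have h1 : 1 - 2 * h ≤ s := by
      rw [hs]
      nlinarith [Real.sq_sqrt (le_of_lt h2h), Real.sqrt_nonneg (1 - 2*h),
        Real.sqrt_le_sqrt (show 1 - 2*h ≤ 1 by linarith)]
    have : ρ ≤ r * (2 * h) := by
      rw [hρ]
      apply mul_le_mul_of_nonneg_left _ (le_of_lt hr0)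
      linarith
    calc ρ ≤ r * (2 * h) := this
      _ = 2 * lam * (μ * ν * r) := by ring
      _ = 2 * lam := by rw [hμν]; ring
  -- set up G and its derivative
  set S : Y →L[ℝ] X := (DF0.symm : Y →L[ℝ] X) with hS
  set G : X → X := fun x => x - S (F x) with hG
  set DG : X → X →L[ℝ] X := fun x => ContinuousLinearMap.id ℝ X - S.comp (DF x) with hDG
  have hGderiv : ∀ x ∈ U, HasFDerivAt G (DG x) x := by
    intro x hx
    exact (hasFDerivAt_id x).sub ((S.hasFDerivAt).comp x (hdiff x hx))
  have hDGeq : ∀ z, DG z = S.comp (DF x₀ - DF z) := by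
    intro z
    ext v
    simp [hDG, hS, ← hDF0, ContinuousLinearMap.comp_apply, map_sub]
  have hx₀ball : x₀ ∈ ball x₀ r := mem_ball_self hr0
  have hDGbound : ∀ z ∈ ball x₀ r, ‖DG z‖ ≤ μ * (ν * ‖z - x₀‖) := by
    intro z hz
    rw [hDGeq z]
    calc ‖S.comp (DF x₀ - DF z)‖ ≤ ‖S‖ * ‖DF x₀ - DF z‖ := ContinuousLinearMap.opNorm_comp_le _ _
      _ ≤ μ * (ν * ‖z - x₀‖) := by
          apply mul_le_mul hμ _ (norm_nonneg _) (le_of_lt hμ0)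
          have := hLip x₀ hx₀ball z hz
          rwa [norm_sub_rev z x₀]
  have hsubU : Metric.closedBall x₀ ρ ⊆ U := fun z hz =>
    hball (lt_of_le_of_lt (mem_closedBall.1 hz) hρr)
  have hsubB : Metric.closedBall x₀ ρ ⊆ ball x₀ r := fun z hz =>
    mem_ball.2 (lt_of_le_of_lt (mem_closedBall.1 hz) hρr)
  -- quadratic estimate
  have hquadest : ∀ x ∈ Metric.closedBall x₀ ρ, ‖G x - G x₀‖ ≤ μ * ν / 2 * ‖x - x₀‖ ^ 2 := by
    intro x hx
    set v : X := x - x₀ with hv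
    set c : ℝ → X := fun t => x₀ + t • v with hc
    have hcm : ∀ t ∈ Icc (0:ℝ) 1, c t ∈ Metric.closedBall x₀ ρ := by
      intro t ht
      rw [mem_closedBall, dist_eq_norm]
      have : c t - x₀ = t • v := by simp [hc]
      rw [this, norm_smul, Real.norm_eq_abs, abs_of_nonneg ht.1]
      calc t * ‖v‖ ≤ 1 * ‖v‖ := by
            apply mul_le_mul_of_nonneg_right ht.2 (norm_nonneg _)
        _ = ‖v‖ := one_mul _
        _ ≤ ρ := by rw [hv, ← dist_eq_norm]; exact mem_closedBall.1 hx
    have hder : ∀ t ∈ Set.uIcc (0:ℝ) 1, HasDerivAt (fun t => G (c t)) (DG (c t) v) t := by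
      intro t ht
      rw [Set.uIcc_of_le (by norm_num : (0:ℝ) ≤ 1)] at ht
      have h1 : HasDerivAt c v t := by
        have : HasDerivAt (fun t : ℝ => t • v) ((1:ℝ) • v) t :=
          (hasDerivAt_id t).smul_const v
        simpa [hc] using this.const_add x₀
      exact (hGderiv (c t) (hsubU (hcm t ht))).comp_hasDerivAt t h1
    have hcont' : ContinuousOn (fun t => DG (c t) v) (Set.uIcc (0:ℝ) 1) := by
      rw [Set.uIcc_of_le (by norm_num : (0:ℝ) ≤ 1)]
      have hcc : Continuous c := by continuity
      have h1 : ContinuousOn (fun t => DF (c t)) (Icc (0:ℝ) 1) :=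
        hcont.comp hcc.continuousOn (fun t ht => hsubU (hcm t ht))
      have h2 : ContinuousOn (fun t => DG (c t)) (Icc (0:ℝ) 1) := by
        simp only [hDG]
        exact continuousOn_const.sub
          ((ContinuousLinearMap.compL ℝ X Y X S).continuous.comp_continuousOn h1)
      exact (ContinuousLinearMap.apply ℝ X v).continuous.comp_continuousOn h2
    have hint : IntervalIntegrable (fun t => DG (c t) v) MeasureTheory.volume 0 1 :=
      hcont'.intervalIntegrable
    have hFTC : ∫ t in (0:ℝ)..1, DG (c t) v = G (c 1) - G (c 0) :=
      intervalIntegral.integral_eq_sub_of_hasDerivAt hder hint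
    have hc0 : c 0 = x₀ := by simp [hc]
    have hc1 : c 1 = x := by simp [hc, hv]
    have hbound : ∀ t ∈ Set.Ioc (0:ℝ) 1, ‖DG (c t) v‖ ≤ (μ * ν * ‖v‖ ^ 2) * t := by
      intro t ht
      have hct : c t ∈ ball x₀ r := hsubB (hcm t ⟨le_of_lt ht.1, ht.2⟩)
      have hctn : ‖c t - x₀‖ = t * ‖v‖ := by
        have : c t - x₀ = t • v := by simp [hc]
        rw [this, norm_smul, Real.norm_eq_abs, abs_of_nonneg (le_of_lt ht.1)]
      calc ‖DG (c t) v‖ ≤ ‖DG (c t)‖ * ‖v‖ := (DG (c t)).le_opNorm v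
        _ ≤ (μ * (ν * ‖c t - x₀‖)) * ‖v‖ := by
            apply mul_le_mul_of_nonneg_right (hDGbound _ hct) (norm_nonneg _)
        _ = (μ * ν * ‖v‖ ^ 2) * t := by rw [hctn]; ring
    have hgint : IntervalIntegrable (fun t => (μ * ν * ‖v‖ ^ 2) * t)
        MeasureTheory.volume 0 1 := by
      exact (continuous_const.mul continuous_id).intervalIntegrable _ _
    have hnorm : ‖∫ t in (0:ℝ)..1, DG (c t) v‖ ≤ |∫ t in (0:ℝ)..1, (μ * ν * ‖v‖ ^ 2) * t| := by
      apply intervalIntegral.norm_integral_le_abs_of_norm_le _ hgint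
      filter_upwards [MeasureTheory.ae_restrict_mem measurableSet_Ioc] with t ht
      rw [Set.uIoc_of_le (by norm_num : (0:ℝ) ≤ 1)] at *
      exact hbound t ht
    have hval : ∫ t in (0:ℝ)..1, (μ * ν * ‖v‖ ^ 2) * t = μ * ν * ‖v‖ ^ 2 / 2 := by
      rw [intervalIntegral.integral_const_mul, integral_id]
      ring
    rw [hFTC, hc0, hc1] at hnorm
    rw [hval] at hnorm
    have : |μ * ν * ‖v‖ ^ 2 / 2| = μ * ν * ‖v‖ ^ 2 / 2 := by
      apply abs_of_nonneg; positivity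
    rw [this] at hnorm
    calc ‖G x - G x₀‖ ≤ μ * ν * ‖v‖ ^ 2 / 2 := hnorm
      _ = μ * ν / 2 * ‖x - x₀‖ ^ 2 := by rw [hv]; ring
  -- self-map
  have hGx₀ : ‖G x₀ - x₀‖ ≤ lam := by
    have : G x₀ - x₀ = -(S (F x₀)) := by simp [hG]
    rw [this, norm_neg]; exact hlam
  have hself : MapsTo G (Metric.closedBall x₀ ρ) (Metric.closedBall x₀ ρ) := by
    intro x hx
    rw [mem_closedBall, dist_eq_norm]
    have e1 := hquadest x hx
    have e2 : ‖G x - x₀‖ ≤ ‖G x - G x₀‖ + ‖G x₀ - x₀‖ :=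
      norm_sub_le_norm_sub_add_norm_sub (G x) (G x₀) x₀
    have h1 : ‖x - x₀‖ ≤ ρ := by rw [← dist_eq_norm]; exact mem_closedBall.1 hx
    have h2 : ‖x - x₀‖ ^ 2 ≤ ρ ^ 2 := pow_le_pow_left₀ (norm_nonneg _) h1 2
    have h3 : (0:ℝ) ≤ μ * ν / 2 := by positivity
    have h4 := mul_le_mul_of_nonneg_left h2 h3
    linarith
  -- Lipschitz on any sub-closedball of ball x₀ r
  have hLipG : ∀ t : ℝ, 0 ≤ t → t < r → ∀ x ∈ Metric.closedBall x₀ t,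
      ∀ y ∈ Metric.closedBall x₀ t, ‖G y - G x‖ ≤ (μ * ν * t) * ‖y - x‖ := by
    intro t ht0 htr x hx y hy
    have hd : ∀ z ∈ Metric.closedBall x₀ t, HasFDerivWithinAt G (DG z) (Metric.closedBall x₀ t) z :=
      fun z hz =>
        (hGderiv z (hball (mem_ball.2 (lt_of_le_of_lt (mem_closedBall.1 hz) htr)))).hasFDerivWithinAt
    have hb : ∀ z ∈ Metric.closedBall x₀ t, ‖DG z‖ ≤ μ * ν * t := by
      intro z hz
      have e1 := hDGbound z (mem_ball.2 (lt_of_le_of_lt (mem_closedBall.1 hz) htr))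
      have e2 : ‖z - x₀‖ ≤ t := by rw [← dist_eq_norm]; exact mem_closedBall.1 hz
      refine e1.trans ?_
      rw [show μ * ν * t = μ * (ν * t) by ring]
      gcongr
    exact Convex.norm_image_sub_le_of_norm_hasFDerivWithin_le hd hb (convex_closedBall x₀ t) hx hy
  -- contraction on closedBall ρ
  set K : NNReal := ⟨1 - s, by linarith⟩ with hK
  have hcontract : ContractingWith K (hself.restrict G _ _) := by
    constructor
    · rw [← NNReal.coe_lt_coe]
      show (1:ℝ) - s < 1
      linarith
    · apply LipschitzWith.of_dist_le_mul
      rintro ⟨x, hx⟩ ⟨y, hy⟩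
      have e0 := hLipG ρ (le_of_lt hρ0) hρr y hy x hx
      rw [hk1] at e0
      simp only [Subtype.dist_eq, MapsTo.val_restrict_apply]
      show dist (G x) (G y) ≤ (K : ℝ) * dist x y
      rw [dist_eq_norm, dist_eq_norm, hK]
      show ‖G x - G y‖ ≤ (1 - s) * ‖x - y‖
      exact e0
  obtain ⟨a, haball, hafix, -⟩ := ContractingWith.exists_fixedPoint'
    (Metric.isClosed_closedBall.isComplete) hself hcontract
    (mem_closedBall_self (le_of_lt hρ0)) (edist_ne_top _ _)
  have haF : F a = 0 := by
    have h1 : S (F a) = 0 := by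
      have h2 := hafix
      rw [Function.IsFixedPt, hG] at h2
      exact sub_eq_self.mp h2
    have : F a = DF0 (DF0.symm (F a)) := (DF0.apply_symm_apply _).symm
    rw [this]
    show DF0 (S (F a)) = 0
    rw [h1, map_zero]
  refine ⟨part1, a, haball, haF, ?_⟩
  -- uniqueness
  intro x hx hFx
  have hGx : G x = x := by simp [hG, hFx]
  have hGa : G a = a := hafix
  set t : ℝ := max ρ ‖x - x₀‖ with ht
  have ht0 : 0 ≤ t := le_trans (le_of_lt hρ0) (le_max_left _ _)
  have htr : t < r := by
    apply max_lt hρr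
    rw [← dist_eq_norm]; exact mem_ball.1 hx
  have hxt : x ∈ Metric.closedBall x₀ t := by
    rw [mem_closedBall, dist_eq_norm]; exact le_max_right _ _
  have hat : a ∈ Metric.closedBall x₀ t := by
    rw [mem_closedBall]
    exact le_trans (mem_closedBall.1 haball) (le_max_left _ _)
  have := hLipG t ht0 htr a hat x hxt
  rw [hGx, hGa] at this
  have hkey : ‖x - a‖ * (1 - μ * ν * t) ≤ 0 := by nlinarith
  have hpos' : 0 < 1 - μ * ν * t := by
    have : μ * ν * t < μ * ν * r := by
      apply mul_lt_mul_of_pos_left htr (mul_pos hμ0 hν0)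
    rw [hμν] at this
    linarith
  have : ‖x - a‖ ≤ 0 := by
    by_contra hcon
    push_neg at hcon
    nlinarith
  have : x - a = 0 := norm_le_zero_iff.1 this
  exact sub_eq_zero.1 this
end

section
/- Let γ : [0, L] → ℝ^m be a continuous arc-length parameterized C¹ curve with unit tangent τ, let φ(r) = r/L, and define the matrix Θ = ∫₀^L (1 - φ(r))·φ(r)·(Id - τ(r)τ(r)ᵀ) dr, where Id - τ(r)τ(r)ᵀ is the orthogonal projector onto the orthogonal complement of τ(r). If L > |γ(L) - γ(0)|, then Θ is positive definite (in particular invertible). -/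
open MeasureTheory intervalIntegral Set Filter

theorem theta_positive_definite (m : ℕ) (L : ℝ) (hL : 0 < L)
    (γ τ : ℝ → EuclideanSpace ℝ (Fin m))
    (hγ : ∀ t ∈ Set.Icc 0 L, HasDerivAt γ (τ t) t)
    (hτc : ContinuousOn τ (Set.Icc 0 L))
    (hunit : ∀ t ∈ Set.Icc 0 L, ‖τ t‖ = 1)
    (hcomm : ‖γ L - γ 0‖ < L)
    (V : EuclideanSpace ℝ (Fin m)) (hV : V ≠ 0) :
    0 < ∫ r in (0 : ℝ)..L,
      (1 - r / L) * (r / L) * (‖V‖ ^ 2 - (inner ℝ (τ r) V : ℝ) ^ 2) := by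
  have hV' : 0 < ‖V‖ := norm_pos_iff.2 hV
  set f : ℝ → ℝ := fun r => (inner ℝ (τ r) V : ℝ) with hfdef
  set g : ℝ → ℝ := fun r => (1 - r / L) * (r / L) * (‖V‖ ^ 2 - f r ^ 2) with hgdef
  have hfc : ContinuousOn f (Icc 0 L) := hτc.inner continuousOn_const
  have hgc : ContinuousOn g (Icc 0 L) := by
    apply ContinuousOn.mul
    · exact ((continuousOn_const.sub (continuousOn_id.div_const L)).mul
        (continuousOn_id.div_const L))
    · exact continuousOn_const.sub (hfc.pow 2)
  have hCS : ∀ r ∈ Icc (0:ℝ) L, f r ^ 2 ≤ ‖V‖ ^ 2 := by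
    intro r hr
    have h1 : |f r| ≤ ‖τ r‖ * ‖V‖ := abs_real_inner_le_norm _ _
    rw [hunit r hr, one_mul] at h1
    nlinarith [abs_nonneg (f r), sq_abs (f r)]
  have hgnn : ∀ r ∈ Icc (0:ℝ) L, 0 ≤ g r := by
    intro r hr
    have h1 : 0 ≤ 1 - r / L := by
      have : r / L ≤ 1 := (div_le_one hL).2 hr.2
      linarith
    have h2 : 0 ≤ r / L := div_nonneg hr.1 hL.le
    have h3 : 0 ≤ ‖V‖ ^ 2 - f r ^ 2 := by linarith [hCS r hr]
    positivity
  have hτint : IntervalIntegrable τ volume 0 L := by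
    apply ContinuousOn.intervalIntegrable
    rwa [uIcc_of_le hL.le]
  have hFTC : (∫ r in (0:ℝ)..L, τ r) = γ L - γ 0 := by
    apply integral_eq_sub_of_hasDerivAt _ hτint
    intro x hx
    rw [uIcc_of_le hL.le] at hx
    exact hγ x hx
  have hfint_eq : (∫ r in (0:ℝ)..L, f r) = (inner ℝ (γ L - γ 0) V : ℝ) := by
    have h := (innerSL ℝ V).intervalIntegral_comp_comm hτint (a := 0) (b := L)
    simp only [innerSL_apply_apply] at h
    rw [hFTC] at h
    calc (∫ r in (0:ℝ)..L, f r) = ∫ r in (0:ℝ)..L, (inner ℝ V (τ r) : ℝ) := by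
          simp only [hfdef, real_inner_comm]
      _ = (inner ℝ V (γ L - γ 0) : ℝ) := h
      _ = (inner ℝ (γ L - γ 0) V : ℝ) := real_inner_comm _ _
  have habs : |∫ r in (0:ℝ)..L, f r| < L * ‖V‖ := by
    rw [hfint_eq]
    calc |(inner ℝ (γ L - γ 0) V : ℝ)| ≤ ‖γ L - γ 0‖ * ‖V‖ := abs_real_inner_le_norm _ _
      _ < L * ‖V‖ := mul_lt_mul_of_pos_right hcomm hV'
  -- find an interior point where the inner product is strictly smaller
  obtain ⟨r₀, hr₀, hfr₀⟩ : ∃ r₀ ∈ Ioo (0:ℝ) L, f r₀ ^ 2 < ‖V‖ ^ 2 := by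
    by_contra hcon
    push_neg at hcon
    have heq : ∀ r ∈ Ioo (0:ℝ) L, f r = ‖V‖ ∨ f r = -‖V‖ := by
      intro r hr
      have h1 := hCS r (Ioo_subset_Icc_self hr)
      have h2 := hcon r hr
      have h3 : (f r - ‖V‖) * (f r + ‖V‖) = 0 := by nlinarith
      rcases mul_eq_zero.1 h3 with h | h
      · exact Or.inl (by linarith)
      · exact Or.inr (by linarith)
    have hmid : L / 2 ∈ Ioo (0:ℝ) L := ⟨by linarith, by linarith⟩
    set s := f (L / 2) with hsdef
    have hconst : ∀ r ∈ Ioo (0:ℝ) L, f r = s := by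
      intro r hr
      by_contra hne
      have hop : f r = -s := by
        rcases heq r hr with h | h <;> rcases heq _ hmid with h' | h' <;>
          first
          | exact absurd (h.trans h'.symm) hne
          | (rw [h, hsdef, h']; try ring)
      have hsub : uIcc r (L / 2) ⊆ Ioo (0:ℝ) L :=
        ordConnected_Ioo.uIcc_subset hr hmid
      have hcsub : ContinuousOn f (uIcc r (L / 2)) :=
        hfc.mono (hsub.trans Ioo_subset_Icc_self)
      have h0 : (0:ℝ) ∈ uIcc (f r) (f (L / 2)) := by
        rw [hop, ← hsdef]
        rcases le_total 0 s with h | h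
        · exact mem_uIcc.2 (Or.inl ⟨by linarith, h⟩)
        · exact mem_uIcc.2 (Or.inr ⟨h, by linarith⟩)
      obtain ⟨c, hc, hfc0⟩ := intermediate_value_uIcc hcsub h0
      have := hcon c (hsub hc)
      rw [hfc0] at this
      nlinarith
    have hsabs : |s| = ‖V‖ := by
      rcases heq _ hmid with h | h <;> rw [← hsdef] at h <;> rw [h] <;>
        simp [abs_of_nonneg, norm_nonneg]
    have haeL : ∀ᵐ x : ℝ ∂volume, x ≠ L := by
      rw [MeasureTheory.ae_iff]
      have : {x : ℝ | ¬ x ≠ L} = {L} := by ext x; simp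
      rw [this]
      exact Real.volume_singleton
    have hcongr : (∫ r in (0:ℝ)..L, f r) = ∫ r in (0:ℝ)..L, s := by
      apply intervalIntegral.integral_congr_ae
      filter_upwards [haeL] with x hx hmem
      rw [uIoc_of_le hL.le] at hmem
      exact hconst x ⟨hmem.1, lt_of_le_of_ne hmem.2 hx⟩
    rw [hcongr, intervalIntegral.integral_const, smul_eq_mul, sub_zero, abs_mul,
      abs_of_pos hL, hsabs] at habs
    exact lt_irrefl _ habs
  -- positivity
  have hg0 : 0 < g r₀ := by
    have h1 : 0 < 1 - r₀ / L := by
      have : r₀ / L < 1 := (div_lt_one hL).2 hr₀.2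
      linarith
    have h2 : 0 < r₀ / L := div_pos hr₀.1 hL
    have h3 : 0 < ‖V‖ ^ 2 - f r₀ ^ 2 := by linarith
    positivity
  have hgat : ContinuousAt g r₀ :=
    (hgc.continuousWithinAt (Ioo_subset_Icc_self hr₀)).continuousAt
      (Icc_mem_nhds hr₀.1 hr₀.2)
  have hev : ∀ᶠ x in nhds r₀, 0 < g x := hgat.eventually (eventually_gt_nhds hg0)
  obtain ⟨ε, hε, hball⟩ := Metric.eventually_nhds_iff.1 hev
  set δ : ℝ := min ε (min r₀ (L - r₀)) / 2 with hδdef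
  have hδpos : 0 < δ := by
    have h1 : 0 < L - r₀ := by linarith [hr₀.2]
    have hmin : 0 < min ε (min r₀ (L - r₀)) := lt_min hε (lt_min hr₀.1 h1)
    rw [hδdef]; linarith
  have hδε : δ < ε := by
    have : δ ≤ ε / 2 := by
      apply div_le_div_of_nonneg_right _ (by norm_num)
      exact min_le_left _ _
    linarith
  have hδr : δ ≤ r₀ / 2 := by
    apply div_le_div_of_nonneg_right _ (by norm_num)
    exact (min_le_right _ _).trans (min_le_left _ _)
  have hδL : δ ≤ (L - r₀) / 2 := by
    apply div_le_div_of_nonneg_right _ (by norm_num)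
    exact (min_le_right _ _).trans (min_le_right _ _)
  set a : ℝ := r₀ - δ with hadef
  set b : ℝ := r₀ + δ with hbdef
  have ha0 : 0 < a := by simp only [hadef]; nlinarith [hr₀.1]
  have hbL : b < L := by simp only [hbdef]; nlinarith [hr₀.2]
  have hab : a < b := by simp only [hadef, hbdef]; linarith
  have hmono : ∀ c d : ℝ, 0 ≤ c → c ≤ d → d ≤ L → IntervalIntegrable g volume c d := by
    intro c d hc hcd hdL
    apply ContinuousOn.intervalIntegrable
    apply hgc.mono
    rw [uIcc_of_le hcd]
    exact Icc_subset_Icc hc hdL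
  have i1 : IntervalIntegrable g volume 0 a := hmono 0 a le_rfl ha0.le (by linarith)
  have i2 : IntervalIntegrable g volume a b := hmono a b ha0.le hab.le hbL.le
  have i3 : IntervalIntegrable g volume b L := hmono b L (by linarith) hbL.le le_rfl
  have i12 : IntervalIntegrable g volume 0 b := hmono 0 b le_rfl (by linarith) hbL.le
  have hsplit : (∫ r in (0:ℝ)..L, g r) =
      (∫ r in (0:ℝ)..a, g r) + (∫ r in a..b, g r) + (∫ r in b..L, g r) := by
    rw [integral_add_adjacent_intervals i1 i2, integral_add_adjacent_intervals i12 i3]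
  have hpos2 : 0 < ∫ r in a..b, g r := by
    apply intervalIntegral_pos_of_pos_on i2 _ hab
    intro x hx
    apply hball
    rw [Real.dist_eq, abs_lt]
    constructor
    · simp only [hadef] at hx; linarith [hx.1, hδε]
    · simp only [hbdef] at hx; linarith [hx.2, hδε]
  have hpos1 : 0 ≤ ∫ r in (0:ℝ)..a, g r := by
    apply intervalIntegral.integral_nonneg ha0.le
    intro u hu
    exact hgnn u ⟨hu.1, hu.2.trans (by linarith)⟩
  have hpos3 : 0 ≤ ∫ r in b..L, g r := by
    apply intervalIntegral.integral_nonneg hbL.le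
    intro u hu
    exact hgnn u ⟨(by linarith [hu.1] : (0:ℝ) ≤ u), hu.2⟩
  have : 0 < ∫ r in (0:ℝ)..L, g r := by
    rw [hsplit]; linarith
  exact this
end
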